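/- Completeness of the abstraction with respect to the policy automaton: for any language L ⊆ Σ^{≤ω}, γ_{≤ω}(α_{≤ω}(L)) ⊆ L(𝔄) if and only if L ⊆ L(𝔄), where L(𝔄) is the set of finite words accepted as NFA plus infinite words accepted as Büchi automaton. -/

import Mathlib

variable {Q : Type*} {A : Type*}

/-- Reachability in a nondeterministic automaton: `q` is reachable from `p` reading `w`. -/
def Reach (δ : Q → A → Set Q) : Q → List A → Q → Prop
  | p, [], q => p = q
  | p, a :: w, q => ∃ r ∈ δ p a, Reach δ r w q

/-- Reachability visiting some final state along the way (possibly the endpoints). -/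
def ReachF (δ : Q → A → Set Q) (Fs : Set Q) (p : Q) (w : List A) (q : Q) : Prop :=
  ∃ u v r, w = u ++ v ∧ r ∈ Fs ∧ Reach δ p u r ∧ Reach δ r v q

/-- The relation ∼ : `w ∼ u` iff for all states `p q`, reachability and
reachability-through-final-states via `w` and via `u` coincide. -/
def Sim (δ : Q → A → Set Q) (Fs : Set Q) (w u : List A) : Prop :=
  ∀ p q : Q, (Reach δ p w q ↔ Reach δ p u q) ∧ (ReachF δ Fs p w q ↔ ReachF δ Fs p u q)

/-- The class of a word in 𝒬 = Σ⁺/∼ ⊎ {[ε]} : for a nonempty word its ∼-class,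
and `[ε] = {ε}` for the empty word. -/
def wordClass (δ : Q → A → Set Q) (Fs : Set Q) (w : List A) : Set (List A) :=
  {u | (w = [] ∧ u = []) ∨ (w ≠ [] ∧ u ≠ [] ∧ Sim δ Fs w u)}

/-- `C` is an element of 𝒬. -/
def IsClass (δ : Q → A → Set Q) (Fs : Set Q) (C : Set (List A)) : Prop :=
  ∃ w : List A, C = wordClass δ Fs w

/-- Elementwise concatenation of languages of finite words. -/
def mulSet (L M : Set (List A)) : Set (List A) := Set.image2 (· ++ ·) L M

/-- Monoid multiplication of classes: the class of the concatenation of representatives. -/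
def classMul (δ : Q → A → Set Q) (Fs : Set Q) (C D : Set (List A)) : Set (List A) :=
  {v | ∃ w ∈ C, ∃ u ∈ D, v ∈ wordClass δ Fs (w ++ u)}

/-- Finite star of a language. -/
def starSet (L : Set (List A)) : Set (List A) :=
  {w | ∃ l : List (List A), (∀ u ∈ l, u ∈ L) ∧ w = l.flatten}

/-- Possibly infinite words over `A` : Σ^{≤ω}, as stable `Option`-valued streams. -/
def Word (A : Type*) : Type _ := {g : ℕ → Option A // ∀ n, g n = none → g (n + 1) = none}

/-- A finite word as an element of Σ^{≤ω}. -/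
def ofList (w : List A) : Word A :=
  ⟨fun n => w[n]?, fun n h => by
    rw [List.getElem?_eq_none_iff] at *
    omega⟩

/-- An infinite word as an element of Σ^{≤ω}. -/
def ofStream (s : ℕ → A) : Word A := ⟨fun n => some (s n), fun n h => by simp at h⟩

/- The (possibly infinite) concatenation `f 0 · f 1 · f 2 ⋯` of a sequence of finite
words, as an element of Σ^{≤ω}. -/
open Classical in
noncomputable def prodWord (f : ℕ → List A) : Word A :=
  ⟨fun n =>
    if h : ∃ k, n < ((List.range k).flatMap f).length then
      ((List.range h.choose).flatMap f)[n]?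
    else none, by
    intro n hn
    dsimp only at hn ⊢
    by_cases h : ∃ k, n < ((List.range k).flatMap f).length
    · exfalso
      rw [dif_pos h, List.getElem?_eq_none_iff] at hn
      have := h.choose_spec
      omega
    · have h2 : ¬ ∃ k, n + 1 < ((List.range k).flatMap f).length := by
        push_neg at h ⊢
        intro k
        have := h k
        omega
      rw [dif_neg h2]⟩

/-- Concatenation of a finite word with a possibly infinite word. -/
def catWord (u : List A) (w : Word A) : Word A :=
  ⟨fun n => if n < u.length then u[n]? else w.1 (n - u.length), by
    intro n hn
    dsimp only at hn ⊢
    by_cases h : n < u.length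
    · exfalso
      rw [if_pos h, List.getElem?_eq_none_iff] at hn
      omega
    · rw [if_neg h] at hn
      have h2 : ¬ n + 1 < u.length := by omega
      rw [if_neg h2]
      have h3 : n + 1 - u.length = (n - u.length) + 1 := by omega
      rw [h3]
      exact w.2 _ hn⟩

/-- `CD^ω` : all words `w₀w₁w₂⋯` with `w₀ ∈ C` and `wᵢ ∈ D` for `i ≥ 1`. -/
def omegaProd (C D : Set (List A)) : Set (Word A) :=
  {w | ∃ f : ℕ → List A, f 0 ∈ C ∧ (∀ i, 1 ≤ i → f i ∈ D) ∧ w = prodWord f}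

/-- `L^ω` : all words `w₁w₂w₃⋯` with all `wᵢ ∈ L`. -/
def omegaPow (L : Set (List A)) : Set (Word A) :=
  {w | ∃ f : ℕ → List A, (∀ i, f i ∈ L) ∧ w = prodWord f}

/-- Acceptance of a finite word (as an NFA). -/
def NFAAccepts (δ : Q → A → Set Q) (q0 : Q) (Fs : Set Q) (w : List A) : Prop :=
  ∃ q ∈ Fs, Reach δ q0 w q

/-- Büchi acceptance of an infinite word: a run from `q0` visiting `Fs` infinitely often. -/
def BuchiAccepts (δ : Q → A → Set Q) (q0 : Q) (Fs : Set Q) (s : ℕ → A) : Prop :=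
  ∃ r : ℕ → Q, r 0 = q0 ∧ (∀ n, r (n + 1) ∈ δ (r n) (s n)) ∧ {n | r n ∈ Fs}.Infinite

/-- The language `L(𝔄) ⊆ Σ^{≤ω}` of the extended Büchi automaton: finite words accepted
as an NFA together with infinite words accepted as a Büchi automaton. -/
def LangOf (δ : Q → A → Set Q) (q0 : Q) (Fs : Set Q) : Set (Word A) :=
  {w | (∃ l : List A, w = ofList l ∧ NFAAccepts δ q0 Fs l) ∨
       (∃ s : ℕ → A, w = ofStream s ∧ BuchiAccepts δ q0 Fs s)}

/-- The set 𝒬 of classes, as a type. -/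
def QClass (δ : Q → A → Set Q) (Fs : Set Q) : Type _ := {C : Set (List A) // IsClass δ Fs C}

/-- The set 𝓒 of pairs `(C, D)` of classes with `CD = C` and `DD = D`, as a type. -/
def CPair (δ : Q → A → Set Q) (Fs : Set Q) : Type _ :=
  {p : Set (List A) × Set (List A) //
    IsClass δ Fs p.1 ∧ IsClass δ Fs p.2 ∧
    classMul δ Fs p.1 p.2 = p.1 ∧ classMul δ Fs p.2 p.2 = p.2}

/-- The language `CD^ω` denoted by an element of 𝓒. -/
def concPair {δ : Q → A → Set Q} {Fs : Set Q} (p : CPair δ Fs) : Set (Word A) :=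
  omegaProd p.1.1 p.1.2

/-- A subset 𝒱 ⊆ 𝓒 is closed: whenever `UV^ω ∩ CD^ω ≠ ∅` for `(C,D) ∈ 𝒱` and
`(U,V) ∈ 𝓒`, then `(U,V) ∈ 𝒱`. -/
def IsClosedC {δ : Q → A → Set Q} {Fs : Set Q} (𝒱 : Set (CPair δ Fs)) : Prop :=
  ∀ p ∈ 𝒱, ∀ q : CPair δ Fs, (concPair q ∩ concPair p).Nonempty → q ∈ 𝒱

/-- Pre-abstraction 𝔣. -/
def frakF (δ : Q → A → Set Q) (Fs : Set Q) (V : Set (Word A)) : Set (CPair δ Fs) :=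
  {p | (concPair p ∩ V).Nonempty}

/-- Pre-concretization 𝔤. -/
def frakG {δ : Q → A → Set Q} {Fs : Set Q} (𝒱 : Set (CPair δ Fs)) : Set (Word A) :=
  ⋃ p ∈ 𝒱, concPair p

/-- Closure 𝔠(𝒱) = ⋃_{n ≥ 1} (𝔣 ∘ 𝔤)ⁿ(𝒱). -/
def frakC {δ : Q → A → Set Q} {Fs : Set Q} (𝒱 : Set (CPair δ Fs)) : Set (CPair δ Fs) :=
  ⋃ n : ℕ, (fun 𝒲 => frakF δ Fs (frakG 𝒲))^[n + 1] 𝒱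

/-- Abstraction α_* -/
def alphaStar (δ : Q → A → Set Q) (Fs : Set Q) (U : Set (List A)) : Set (QClass δ Fs) :=
  {C | (C.1 ∩ U).Nonempty}

/-- Concretization γ_* -/
def gammaStar {δ : Q → A → Set Q} {Fs : Set Q} (𝒰 : Set (QClass δ Fs)) : Set (List A) :=
  ⋃ C ∈ 𝒰, C.1

/-- Abstraction α_{≤ω}. -/
def alphaOmega (δ : Q → A → Set Q) (Fs : Set Q) (V : Set (Word A)) : Set (CPair δ Fs) :=
  frakC (frakF δ Fs V)

/-- Concretization γ_{≤ω}. -/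
def gammaOmega {δ : Q → A → Set Q} {Fs : Set Q} (𝒱 : Set (CPair δ Fs)) : Set (Word A) :=
  frakG 𝒱


/-!
Every word of `Σ^{≤ω}` lies in some `CD^ω` with `(C, D) ∈ 𝓒`: a finite word `w` lies in
`[w][ε]^ω`, and an infinite word is cut, by Ramsey's theorem for the colouring of its segments
by their class, into a first block followed by blocks of a single idempotent class. Hence
`L ⊆ γ(α(L))`, which gives one direction.

Conversely `L(𝔄)` is saturated: if some word of `CD^ω` is accepted, its accepting run passes
through one state `p` at two block boundaries with a final state in between; since the run only
sees words through their classes, every word of `CD^ω` has an accepting run that loops through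
`p`. As `α(L)` is generated from `𝔣(L)` by iterating `𝔣 ∘ 𝔤`, saturation carries `L ⊆ L(𝔄)`
over to `γ(α(L)) ⊆ L(𝔄)`.
-/

section Automaton

variable {δ : Q → A → Set Q} {Fs : Set Q} {p q : Q}

theorem reach_append {u v : List A} :
    Reach δ p (u ++ v) q ↔ ∃ r, Reach δ p u r ∧ Reach δ r v q := by
  induction u generalizing p with
  | nil => simp [Reach]
  | cons a u ih => simp only [List.cons_append, Reach, ih]; grind

theorem reachF_append {u v : List A} :
    ReachF δ Fs p (u ++ v) q ↔
      ∃ r, (ReachF δ Fs p u r ∧ Reach δ r v q) ∨ (Reach δ p u r ∧ ReachF δ Fs r v q) := by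
  constructor
  · rintro ⟨x, y, t, hxy, ht, hx, hy⟩
    rcases List.append_eq_append_iff.1 hxy.symm with ⟨m, rfl, rfl⟩ | ⟨m, rfl, rfl⟩
    · obtain ⟨r, hm, hv⟩ := reach_append.1 hy
      exact ⟨r, .inl ⟨⟨x, m, t, rfl, ht, hx, hm⟩, hv⟩⟩
    · obtain ⟨r, hu, hm⟩ := reach_append.1 hx
      exact ⟨r, .inr ⟨hu, ⟨m, y, t, rfl, ht, hm, hy⟩⟩⟩
  · rintro ⟨r, ⟨⟨x, y, t, rfl, ht, hx, hy⟩, hv⟩ | ⟨hu, ⟨x, y, t, rfl, ht, hx, hy⟩⟩⟩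
    · exact ⟨x, y ++ v, t, by simp, ht, hx, reach_append.2 ⟨r, hy, hv⟩⟩
    · exact ⟨u ++ x, y, t, by simp, ht, reach_append.2 ⟨r, hu, hx⟩, hy⟩

theorem ReachF.reach {w : List A} (h : ReachF δ Fs p w q) : Reach δ p w q := by
  obtain ⟨u, v, r, rfl, -, hu, hv⟩ := h
  exact reach_append.2 ⟨r, hu, hv⟩

variable (δ Fs) in
def profile (w : List A) : Prop × (Q → Q → Prop) × (Q → Q → Prop) :=
  (w = [], fun p q => Reach δ p w q, fun p q => ReachF δ Fs p w q)

theorem profile_eq_iff {u v : List A} :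
    profile δ Fs u = profile δ Fs v ↔ (u = [] ↔ v = []) ∧
      ∀ p q, (Reach δ p u q ↔ Reach δ p v q) ∧ (ReachF δ Fs p u q ↔ ReachF δ Fs p v q) := by
  simp only [profile, Prod.mk.injEq, funext_iff, eq_iff_iff, forall_and]

theorem profile_append {u u' v v' : List A} (hu : profile δ Fs u = profile δ Fs u')
    (hv : profile δ Fs v = profile δ Fs v') :
    profile δ Fs (u ++ v) = profile δ Fs (u' ++ v') := by
  simp only [profile_eq_iff, forall_and] at hu hv ⊢
  obtain ⟨hu₀, hu, huF⟩ := hu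
  obtain ⟨hv₀, hv, hvF⟩ := hv
  simp only [List.append_eq_nil_iff, reach_append, reachF_append, hu₀, hv₀, hu, hv, huF, hvF,
    iff_self, implies_true, and_self]

theorem Reach.of_profile_eq {u v : List A} (h : profile δ Fs u = profile δ Fs v)
    (hu : Reach δ p u q) : Reach δ p v q :=
  ((profile_eq_iff.1 h).2 p q).1.1 hu

theorem ReachF.of_profile_eq {u v : List A} (h : profile δ Fs u = profile δ Fs v)
    (hu : ReachF δ Fs p u q) : ReachF δ Fs p v q :=
  ((profile_eq_iff.1 h).2 p q).2.1 hu

theorem mem_wordClass_iff {u w : List A} :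
    u ∈ wordClass δ Fs w ↔ profile δ Fs u = profile δ Fs w := by
  rw [profile_eq_iff]
  simp only [wordClass, Set.mem_ofPred_eq, Sim]
  rcases u with _ | ⟨a, u⟩ <;> rcases w with _ | ⟨b, w⟩ <;> simp [iff_comm, forall_and]

theorem wordClass_eq_iff {u w : List A} :
    wordClass δ Fs u = wordClass δ Fs w ↔ profile δ Fs u = profile δ Fs w := by
  refine ⟨fun h => mem_wordClass_iff.1 (h ▸ mem_wordClass_iff.2 rfl), fun h => ?_⟩
  ext v
  simp only [mem_wordClass_iff, h]

theorem classMul_wordClass (u w : List A) :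
    classMul δ Fs (wordClass δ Fs u) (wordClass δ Fs w) = wordClass δ Fs (u ++ w) := by
  ext v
  constructor
  · rintro ⟨u', hu', w', hw', hv⟩
    rw [mem_wordClass_iff] at hu' hw' hv ⊢
    rw [hv, profile_append hu' hw']
  · exact fun hv => ⟨u, mem_wordClass_iff.2 rfl, w, mem_wordClass_iff.2 rfl, hv⟩

theorem append_mem_of_classMul_eq {C D : Set (List A)} (hCD : classMul δ Fs C D = C)
    {u v : List A} (hu : u ∈ C) (hv : v ∈ D) : u ++ v ∈ C :=
  hCD ▸ ⟨u, hu, v, hv, mem_wordClass_iff.2 rfl⟩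

theorem IsClass.profile_eq {C : Set (List A)} (hC : IsClass δ Fs C) {u v : List A}
    (hu : u ∈ C) (hv : v ∈ C) : profile δ Fs u = profile δ Fs v := by
  obtain ⟨w, rfl⟩ := hC
  exact (mem_wordClass_iff.1 hu).trans (mem_wordClass_iff.1 hv).symm

theorem IsClass.forall_eq_nil_or {C : Set (List A)} (hC : IsClass δ Fs C) :
    (∀ u ∈ C, u = []) ∨ ∀ u ∈ C, u ≠ [] := by
  obtain ⟨w, rfl⟩ := hC
  have hnil : ∀ u ∈ wordClass δ Fs w, (u = [] ↔ w = []) := fun u hu =>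
    (profile_eq_iff.1 (mem_wordClass_iff.1 hu)).1
  by_cases hw : w = []
  · exact .inl fun u hu => (hnil u hu).2 hw
  · exact .inr fun u hu => mt (hnil u hu).1 hw

end Automaton

section Blocks

/-- The segment `s a ⋯ s (b - 1)` of a stream. -/
def seg (s : ℕ → A) (a b : ℕ) : List A := (List.range' a (b - a)).map s

variable {s : ℕ → A} {a b c : ℕ}

@[simp] theorem seg_length : (seg s a b).length = b - a := by simp [seg]

theorem seg_getElem? {k : ℕ} (hk : k < b - a) : (seg s a b)[k]? = some (s (a + k)) := by
  simp [seg, hk]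

theorem seg_append (hab : a ≤ b) (hbc : b ≤ c) : seg s a b ++ seg s b c = seg s a c := by
  obtain ⟨m, rfl⟩ := Nat.exists_eq_add_of_le hab
  obtain ⟨n, rfl⟩ := Nat.exists_eq_add_of_le hbc
  simp only [seg, ← List.map_append, Nat.add_sub_cancel_left, List.range'_append_1]
  congr 2
  omega

theorem seg_eq_cons (hab : a < b) : seg s a b = s a :: seg s (a + 1) b := by
  rw [seg, seg, show b - a = b - (a + 1) + 1 by omega, List.range'_succ, List.map_cons]

def blockStart (f : ℕ → List A) (k : ℕ) : ℕ := ((List.range k).flatMap f).length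

variable {f : ℕ → List A} {n : ℕ}

theorem blockStart_succ (k : ℕ) : blockStart f (k + 1) = blockStart f k + (f k).length := by
  simp [blockStart, List.range_succ]

theorem blockStart_mono : Monotone (blockStart f) :=
  monotone_nat_of_le_succ fun k => by rw [blockStart_succ]; omega

theorem exists_lt_blockStart (hf : ∀ i, 1 ≤ i → f i ≠ []) (n : ℕ) : ∃ i, n < blockStart f i := by
  refine ⟨n + 2, ?_⟩
  induction n with
  | zero => simp [blockStart_succ, List.length_pos_iff.2 (hf 1 le_rfl)]
  | succ n ih =>
    rw [blockStart_succ (n + 2)]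
    have := List.length_pos_iff.2 (hf (n + 2) (by omega))
    omega

theorem getElem?_flatMap_range_of_le {m m' : ℕ} (hn : n < blockStart f m) (hm : m ≤ m') :
    ((List.range m').flatMap f)[n]? = ((List.range m).flatMap f)[n]? := by
  obtain ⟨d, rfl⟩ := Nat.exists_eq_add_of_le hm
  rw [List.range_add, List.flatMap_append, List.getElem?_append_left hn]

theorem prodWord_apply_of_lt {m : ℕ} (h : n < blockStart f m) :
    (prodWord f).1 n = ((List.range m).flatMap f)[n]? := by
  have hex : ∃ k, n < blockStart f k := ⟨m, h⟩
  simp only [prodWord, blockStart] at hex h ⊢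
  rw [dif_pos hex]
  rcases le_total hex.choose m with hle | hle
  · exact (getElem?_flatMap_range_of_le hex.choose_spec hle).symm
  · exact getElem?_flatMap_range_of_le h hle

theorem prodWord_apply_block {i : ℕ} (h₁ : blockStart f i ≤ n) (h₂ : n < blockStart f (i + 1)) :
    (prodWord f).1 n = (f i)[n - blockStart f i]? := by
  rw [prodWord_apply_of_lt h₂, List.range_succ, List.flatMap_append, List.flatMap_singleton,
    List.getElem?_append_right h₁]
  rfl

theorem prodWord_apply_of_forall_blockStart_le (h : ∀ k, blockStart f k ≤ n) :
    (prodWord f).1 n = none :=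
  dif_neg (by simpa [blockStart] using h)

theorem exists_block {b : ℕ → ℕ} (hb0 : b 0 = 0) (hb : ∀ n, ∃ i, n < b i) (n : ℕ) :
    ∃ i, b i ≤ n ∧ n < b (i + 1) := by
  classical
  have hpos : 0 < Nat.find (hb n) :=
    Nat.pos_of_ne_zero fun h => by simpa [h, hb0] using Nat.find_spec (hb n)
  refine ⟨Nat.find (hb n) - 1, not_lt.1 (Nat.find_min (hb n) (by omega)), ?_⟩
  rw [Nat.sub_add_cancel hpos]
  exact Nat.find_spec (hb n)

end Blocks

section Words

theorem Word.ext {w w' : Word A} (h : ∀ n, w.1 n = w'.1 n) : w = w' := Subtype.ext (funext h)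

theorem Word.apply_eq_none_of_le {w : Word A} {m n : ℕ} (hm : w.1 m = none) (hmn : m ≤ n) :
    w.1 n = none := by
  induction n, hmn using Nat.le_induction with
  | base => exact hm
  | succ n _ ih => exact w.2 n ih

theorem Word.exists_eq_ofList_or_ofStream (w : Word A) :
    (∃ l, w = ofList l) ∨ ∃ s, w = ofStream s := by
  classical
  by_cases h : ∃ n, w.1 n = none
  · have hsome : ∀ k < Nat.find h, (w.1 k).isSome := fun k hk =>
      Option.isSome_iff_ne_none.2 (Nat.find_min h hk)
    refine .inl ⟨List.ofFn fun k : Fin (Nat.find h) => (w.1 k).get (hsome k k.2),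
      Word.ext fun n => ?_⟩
    show w.1 n = (List.ofFn _)[n]?
    rw [List.getElem?_ofFn]
    split_ifs with hn
    · exact (Option.some_get _).symm
    · exact w.apply_eq_none_of_le (Nat.find_spec h) (not_lt.1 hn)
  · push Not at h
    exact .inr ⟨fun n => (w.1 n).get (Option.isSome_iff_ne_none.2 (h n)),
      Word.ext fun n => by simp [ofStream]⟩

theorem ofList_injective : Function.Injective (ofList : List A → Word A) := fun _ _ h =>
  List.ext_getElem? fun n => congrFun (congrArg Subtype.val h) n

theorem ofStream_injective : Function.Injective (ofStream : (ℕ → A) → Word A) := fun _ _ h =>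
  funext fun n => Option.some_injective _ (congrFun (congrArg Subtype.val h) n)

theorem ofList_ne_ofStream (l : List A) (s : ℕ → A) : ofList l ≠ ofStream s := fun h => by
  simpa [ofList, ofStream] using congrFun (congrArg Subtype.val h) l.length

variable {δ : Q → A → Set Q} {q0 : Q} {Fs : Set Q}

theorem ofList_mem_langOf_iff {l : List A} :
    ofList l ∈ LangOf δ q0 Fs ↔ NFAAccepts δ q0 Fs l := by
  simp [LangOf, ofList_injective.eq_iff, ofList_ne_ofStream]

theorem ofStream_mem_langOf_iff {s : ℕ → A} :
    ofStream s ∈ LangOf δ q0 Fs ↔ BuchiAccepts δ q0 Fs s := by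
  simp [LangOf, ofStream_injective.eq_iff, (ofList_ne_ofStream _ _).symm]

variable {f : ℕ → List A} {s : ℕ → A}

theorem prodWord_eq_ofStream_iff (hf : ∀ n, ∃ i, n < blockStart f i) :
    prodWord f = ofStream s ↔ ∀ i, f i = seg s (blockStart f i) (blockStart f (i + 1)) := by
  constructor
  · intro h i
    refine List.ext_getElem? fun k => ?_
    by_cases hk : k < (f i).length
    · have hblock := prodWord_apply_block (f := f) (n := blockStart f i + k) (i := i) (by omega)
        (by rw [blockStart_succ]; omega)
      rw [h, Nat.add_sub_cancel_left] at hblock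
      rw [← hblock, seg_getElem? (by rw [blockStart_succ]; omega)]
      rfl
    · rw [List.getElem?_eq_none (by omega),
        List.getElem?_eq_none (by simp [blockStart_succ]; omega)]
  · intro h
    refine Word.ext fun n => ?_
    obtain ⟨i, h₁, h₂⟩ := exists_block rfl hf n
    rw [prodWord_apply_block h₁ h₂, h i, seg_getElem? (by omega), Nat.add_sub_cancel' h₁]
    rfl

theorem exists_prodWord_eq_ofStream (hf : ∀ n, ∃ i, n < blockStart f i) :
    ∃ s, prodWord f = ofStream s := by
  have hsome : ∀ n, ∃ a, (prodWord f).1 n = some a := fun n => by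
    obtain ⟨i, h₁, h₂⟩ := exists_block rfl hf n
    rw [prodWord_apply_block h₁ h₂, List.getElem?_eq_getElem (by rw [blockStart_succ] at h₂; omega)]
    exact ⟨_, rfl⟩
  choose s hs using hsome
  exact ⟨s, Word.ext hs⟩

theorem prodWord_eq_ofList (hf : ∀ i, 1 ≤ i → f i = []) : prodWord f = ofList (f 0) := by
  have hstart : ∀ k, blockStart f (k + 1) = (f 0).length := fun k => by
    induction k with
    | zero => simp [blockStart]
    | succ k ih => rw [blockStart_succ, ih, hf (k + 1) (by omega), List.length_nil, Nat.add_zero]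
  refine Word.ext fun n => ?_
  by_cases hn : n < (f 0).length
  · exact prodWord_apply_block (i := 0) (Nat.zero_le n) (hstart 0 ▸ hn)
  · rw [prodWord_apply_of_forall_blockStart_le fun k =>
      (blockStart_mono k.le_succ).trans (hstart k ▸ by omega)]
    exact (List.getElem?_eq_none (by omega)).symm

theorem ofStream_eq_prodWord_seg {b : ℕ → ℕ} (hb : StrictMono b) (hb0 : b 0 = 0) :
    ofStream s = prodWord fun i => seg s (b i) (b (i + 1)) := by
  have hstart : ∀ i, blockStart (fun i => seg s (b i) (b (i + 1))) i = b i := fun i => by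
    induction i with
    | zero => simp [blockStart, hb0]
    | succ i ih => rw [blockStart_succ, ih, seg_length, Nat.add_sub_cancel' (hb i.lt_succ_self).le]
  refine ((prodWord_eq_ofStream_iff fun n => ⟨n + 1, ?_⟩).2 fun i => by simp only [hstart]).symm
  rw [hstart]
  exact Nat.lt_of_lt_of_le n.lt_succ_self (hb.id_le _)

end Words

section Runs

variable {δ : Q → A → Set Q} {Fs : Set Q} {s : ℕ → A} {p q : Q}

variable (δ) in
def IsRunOn (s : ℕ → A) (r : ℕ → Q) (a b : ℕ) : Prop :=
  ∀ n, a ≤ n → n < b → r (n + 1) ∈ δ (r n) (s n)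

theorem IsRunOn.mono {r : ℕ → Q} {a a' b b' : ℕ} (h : IsRunOn δ s r a b) (ha : a ≤ a')
    (hb : b' ≤ b) : IsRunOn δ s r a' b' := fun n han hnb => h n (ha.trans han) (hnb.trans_le hb)

theorem IsRunOn.piecewise {r₁ r₂ : ℕ → Q} {a m b : ℕ} (h₁ : IsRunOn δ s r₁ a m)
    (h₂ : IsRunOn δ s r₂ m b) (hm : r₁ m = r₂ m) :
    IsRunOn δ s (fun n => if n < m then r₁ n else r₂ n) a b := by
  intro n han hnb
  by_cases hn : n < m
  · by_cases hn' : n + 1 < m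
    · simpa [hn, hn'] using h₁ n han hn
    · simpa [hn, hn', ← hm, show n + 1 = m by omega] using h₁ n han hn
  · simpa [hn, show ¬ n + 1 < m by omega] using h₂ n (by omega) hnb

theorem reach_seg_iff {a b : ℕ} (hab : a ≤ b) :
    Reach δ p (seg s a b) q ↔ ∃ r : ℕ → Q, r a = p ∧ r b = q ∧ IsRunOn δ s r a b := by
  obtain ⟨d, rfl⟩ := Nat.exists_eq_add_of_le hab
  induction d generalizing a p with
  | zero =>
    simp only [Nat.add_zero, seg, Nat.sub_self, List.range'_zero, List.map_nil]
    refine ⟨fun h => ⟨fun _ => p, rfl, h, fun n h₁ h₂ => by omega⟩, ?_⟩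
    rintro ⟨r, rfl, rfl, -⟩
    rfl
  | succ d ih =>
    rw [seg_eq_cons (by omega), show a + (d + 1) = a + 1 + d by omega]
    constructor
    · rintro ⟨t, ht, hrest⟩
      obtain ⟨r, hr, hrq, hrun⟩ := (ih le_self_add).1 hrest
      refine ⟨Function.update r a p, by simp, by rwa [Function.update_of_ne (by omega)],
        fun n han hnb => ?_⟩
      rcases han.eq_or_lt with rfl | han
      · simpa [hr] using ht
      · simpa [han.ne', (han.trans n.lt_succ_self).ne'] using hrun n han hnb
    · rintro ⟨r, rfl, hrq, hrun⟩
      exact ⟨r (a + 1), hrun a le_rfl (by omega),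
        (ih le_self_add).2 ⟨r, rfl, hrq, hrun.mono a.le_succ le_rfl⟩⟩

theorem reachF_seg_iff {a b : ℕ} (hab : a ≤ b) :
    ReachF δ Fs p (seg s a b) q ↔ ∃ r : ℕ → Q, r a = p ∧ r b = q ∧ IsRunOn δ s r a b ∧
      ∃ m, a ≤ m ∧ m ≤ b ∧ r m ∈ Fs := by
  constructor
  · rintro ⟨u, v, t, huv, ht, hu, hv⟩
    obtain ⟨m, hmu⟩ : ∃ m, a + u.length = m := ⟨_, rfl⟩
    have hm : m ≤ b := by
      have := congrArg List.length huv
      simp only [seg_length, List.length_append] at this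
      omega
    obtain ⟨hu', hv'⟩ := List.append_inj (huv.symm.trans (seg_append (hmu ▸ le_self_add) hm).symm)
      (by simp; omega)
    rw [hu'] at hu
    rw [hv'] at hv
    obtain ⟨r₁, hr₁, hr₁t, hrun₁⟩ := (reach_seg_iff (hmu ▸ le_self_add)).1 hu
    obtain ⟨r₂, hr₂t, hr₂, hrun₂⟩ := (reach_seg_iff hm).1 hv
    refine ⟨_, ?_, by simpa [not_lt.2 hm] using hr₂,
      hrun₁.piecewise hrun₂ (hr₁t.trans hr₂t.symm), m, hmu ▸ le_self_add, hm,
      by simpa [hr₂t] using ht⟩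
    by_cases ha : a < m
    · simpa [ha] using hr₁
    · obtain rfl : m = a := by omega
      simp only [ha, if_false]
      rw [hr₂t, ← hr₁t, hr₁]
  · rintro ⟨r, rfl, rfl, hrun, m, ham, hmb, hm⟩
    exact ⟨seg s a m, seg s m b, r m, (seg_append ham hmb).symm, hm,
      (reach_seg_iff ham).2 ⟨r, rfl, rfl, hrun.mono le_rfl hmb⟩,
      (reach_seg_iff hmb).2 ⟨r, rfl, rfl, hrun.mono ham le_rfl⟩⟩

end Runs

section Buchi

variable {δ : Q → A → Set Q} {Fs : Set Q} {s : ℕ → A} {b : ℕ → ℕ}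

theorem exists_run_of_blocks (hb : Monotone b) (hb0 : b 0 = 0) (hub : ∀ n, ∃ i, n < b i)
    {R : ℕ → ℕ → Q} (hR : ∀ i, IsRunOn δ s (R i) (b i) (b (i + 1)))
    (hagree : ∀ i, R i (b (i + 1)) = R (i + 1) (b (i + 1))) :
    ∃ r : ℕ → Q, (∀ n, r (n + 1) ∈ δ (r n) (s n)) ∧
      ∀ i n, b i ≤ n → n ≤ b (i + 1) → r n = R i n := by
  choose blk hblk using exists_block hb0 hub
  have hchain : ∀ i k, i < k → b k = b (i + 1) → R k (b k) = R i (b (i + 1)) := by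
    intro i k hik hbk
    induction k, hik using Nat.le_induction with
    | base => exact (hagree i).symm
    | succ k hik ih =>
      have hk : b k = b (k + 1) := le_antisymm (hb k.le_succ) (hbk ▸ hb hik)
      rw [← hagree k, ← hk, ih (hk.trans hbk)]
  have hglue : ∀ i n, b i ≤ n → n ≤ b (i + 1) → R (blk n) n = R i n := by
    intro i n h₁ h₂
    obtain ⟨hj₁, hj₂⟩ := hblk n
    generalize blk n = j at hj₁ hj₂ ⊢
    rcases lt_trichotomy j i with hlt | rfl | hgt
    · have := hb (show j + 1 ≤ i from hlt)
      omega
    · rfl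
    · have hbj : b j = b (i + 1) := le_antisymm (by omega) (hb hgt)
      obtain rfl : n = b j := by omega
      rw [hchain i j hgt hbj, hbj]
  refine ⟨fun n => R (blk n) n, fun n => ?_, hglue⟩
  obtain ⟨h₁, h₂⟩ := hblk n
  dsimp only
  rw [hglue (blk n) (n + 1) (by omega) h₂]
  exact hR _ n h₁ h₂

theorem buchiAccepts_of_blocks {q0 : Q} (hb : Monotone b) (hb0 : b 0 = 0)
    (hub : ∀ n, ∃ i, n < b i) {q : ℕ → Q} (hq0 : q 0 = q0)
    (hreach : ∀ i, Reach δ (q i) (seg s (b i) (b (i + 1))) (q (i + 1)))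
    (hF : ∃ᶠ i in Filter.atTop, ReachF δ Fs (q i) (seg s (b i) (b (i + 1))) (q (i + 1))) :
    BuchiAccepts δ q0 Fs s := by
  have hblock : ∀ i, ∃ r : ℕ → Q, r (b i) = q i ∧ r (b (i + 1)) = q (i + 1) ∧
      IsRunOn δ s r (b i) (b (i + 1)) ∧
      (ReachF δ Fs (q i) (seg s (b i) (b (i + 1))) (q (i + 1)) →
        ∃ m, b i ≤ m ∧ m ≤ b (i + 1) ∧ r m ∈ Fs) := fun i => by
    by_cases hi : ReachF δ Fs (q i) (seg s (b i) (b (i + 1))) (q (i + 1))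
    · obtain ⟨r, h₁, h₂, hrun, hvisit⟩ := (reachF_seg_iff (hb i.le_succ)).1 hi
      exact ⟨r, h₁, h₂, hrun, fun _ => hvisit⟩
    · obtain ⟨r, h₁, h₂, hrun⟩ := (reach_seg_iff (hb i.le_succ)).1 (hreach i)
      exact ⟨r, h₁, h₂, hrun, fun h => absurd h hi⟩
  choose R hR₁ hR₂ hrun hvisit using hblock
  obtain ⟨r, hstep, hr⟩ :=
    exists_run_of_blocks hb hb0 hub hrun fun i => (hR₂ i).trans (hR₁ (i + 1)).symm
  refine ⟨r, ?_, hstep, Set.infinite_of_forall_exists_gt fun N => ?_⟩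
  · rw [hr 0 0 hb0.le (Nat.zero_le _), ← hq0, ← hR₁ 0, hb0]
  · obtain ⟨k, hk⟩ := hub N
    obtain ⟨i, hik, hi⟩ := Filter.frequently_atTop.1 hF k
    obtain ⟨m, hm₁, hm₂, hmF⟩ := hvisit i hi
    exact ⟨m, by rw [Set.mem_ofPred_eq, hr i m hm₁ hm₂]; exact hmF, by have := hb hik; omega⟩

theorem exists_accepting_loop [Finite Q] {r : ℕ → Q} (hr : {n | r n ∈ Fs}.Infinite)
    (hb : Monotone b) (hub : ∀ n, ∃ i, n < b i) :
    ∃ j k, 1 ≤ j ∧ j < k ∧ r (b j) = r (b k) ∧ ∃ m, b j ≤ m ∧ m ≤ b k ∧ r m ∈ Fs := by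
  obtain ⟨p, hp⟩ := Finite.exists_infinite_fiber fun j => r (b (j + 1))
  have hp' := Set.infinite_coe_iff.1 hp
  obtain ⟨j, hj⟩ := hp'.nonempty
  obtain ⟨m, hmF, hm⟩ := hr.exists_gt (b (j + 1))
  obtain ⟨k, hk⟩ := hub m
  obtain ⟨k', hk', hkk'⟩ := hp'.exists_gt (j + k)
  simp only [Set.mem_preimage, Set.mem_singleton_iff] at hj hk'
  exact ⟨j + 1, k' + 1, by omega, by omega, hj.trans hk'.symm, m, hm.le,
    hk.le.trans (hb (by omega)), hmF⟩

theorem prodWord_mem_langOf_of_loop {q0 p : Q} {f : ℕ → List A} (hf : ∀ i, 1 ≤ i → f i ≠ [])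
    (h0 : Reach δ q0 (f 0) p) (hloop : ∀ i, 1 ≤ i → ReachF δ Fs p (f i) p) :
    prodWord f ∈ LangOf δ q0 Fs := by
  obtain ⟨s, hs⟩ := exists_prodWord_eq_ofStream (exists_lt_blockStart hf)
  have hblocks := (prodWord_eq_ofStream_iff (exists_lt_blockStart hf)).1 hs
  rw [hs, ofStream_mem_langOf_iff]
  refine buchiAccepts_of_blocks blockStart_mono rfl (exists_lt_blockStart hf)
    (q := fun i => if i = 0 then q0 else p) rfl (fun i => ?_)
    (Filter.Eventually.frequently (Filter.eventually_atTop.2 ⟨1, fun i hi => ?_⟩))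
  · rw [← hblocks]
    rcases i with _ | i
    · simpa using h0
    · simpa using (hloop (i + 1) (by omega)).reach
  · rw [← hblocks]
    simpa [show i ≠ 0 by omega] using hloop i hi

end Buchi

section Saturation

variable {δ : Q → A → Set Q} {Fs : Set Q} {q0 : Q} {C D : Set (List A)}

theorem seg_mem_of_blocks {X Y : Set (List A)} (hXY : ∀ u ∈ X, ∀ v ∈ Y, u ++ v ∈ X)
    {s : ℕ → A} {b : ℕ → ℕ} (hb : Monotone b) {i j : ℕ} (hij : i < j)
    (hi : seg s (b i) (b (i + 1)) ∈ X) (hY : ∀ k, i < k → seg s (b k) (b (k + 1)) ∈ Y) :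
    seg s (b i) (b j) ∈ X := by
  induction j, hij using Nat.le_induction with
  | base => exact hi
  | succ j hij ih =>
    rw [← seg_append (hb (by omega)) (hb j.le_succ)]
    exact hXY _ ih _ (hY j hij)

theorem prodWord_mem_langOf_of_mem_langOf [Finite Q] (hC : IsClass δ Fs C)
    (hD : IsClass δ Fs D) (hCD : classMul δ Fs C D = C) (hDD : classMul δ Fs D D = D)
    (hne : ∀ u ∈ D, u ≠ []) {f f' : ℕ → List A} (hf0 : f 0 ∈ C) (hfD : ∀ i, 1 ≤ i → f i ∈ D)
    (hf0' : f' 0 ∈ C) (hfD' : ∀ i, 1 ≤ i → f' i ∈ D) (hacc : prodWord f ∈ LangOf δ q0 Fs) :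
    prodWord f' ∈ LangOf δ q0 Fs := by
  have hub := exists_lt_blockStart fun i hi => hne _ (hfD i hi)
  obtain ⟨s, hs⟩ := exists_prodWord_eq_ofStream hub
  have hblocks := (prodWord_eq_ofStream_iff hub).1 hs
  rw [hs, ofStream_mem_langOf_iff] at hacc
  obtain ⟨r, hr0, hrun, hinf⟩ := hacc
  set b := blockStart f
  obtain ⟨j, k, hj, hjk, hrjk, m, hm₁, hm₂, hmF⟩ := exists_accepting_loop hinf blockStart_mono hub
  have hrun' : ∀ a a', IsRunOn δ s r a a' := fun _ _ n _ _ => hrun n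
  have hprefix : Reach δ q0 (seg s (b 0) (b j)) (r (b j)) :=
    (reach_seg_iff (blockStart_mono (Nat.zero_le j))).2 ⟨r, hr0, rfl, hrun' _ _⟩
  have hloop : ReachF δ Fs (r (b j)) (seg s (b j) (b k)) (r (b j)) :=
    (reachF_seg_iff (blockStart_mono hjk.le)).2 ⟨r, rfl, hrjk.symm, hrun' _ _, m, hm₁, hm₂, hmF⟩
  have hprefixC : seg s (b 0) (b j) ∈ C :=
    seg_mem_of_blocks (fun _ hu _ hv => append_mem_of_classMul_eq hCD hu hv) blockStart_mono hj
      (hblocks 0 ▸ hf0) fun i hi => hblocks i ▸ hfD i hi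
  have hloopD : seg s (b j) (b k) ∈ D :=
    seg_mem_of_blocks (fun _ hu _ hv => append_mem_of_classMul_eq hDD hu hv) blockStart_mono hjk
      (hblocks j ▸ hfD j hj) fun i hi => hblocks i ▸ hfD i (by omega)
  exact prodWord_mem_langOf_of_loop (fun i hi => hne _ (hfD' i hi))
    (hprefix.of_profile_eq (hC.profile_eq hprefixC hf0'))
    fun i hi => hloop.of_profile_eq (hD.profile_eq hloopD (hfD' i hi))

theorem omegaProd_subset_langOf [Finite Q] (hC : IsClass δ Fs C) (hD : IsClass δ Fs D)
    (hCD : classMul δ Fs C D = C) (hDD : classMul δ Fs D D = D)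
    (h : (omegaProd C D ∩ LangOf δ q0 Fs).Nonempty) : omegaProd C D ⊆ LangOf δ q0 Fs := by
  obtain ⟨_, ⟨f, hf0, hfD, rfl⟩, hacc⟩ := h
  rintro _ ⟨f', hf0', hfD', rfl⟩
  rcases hD.forall_eq_nil_or with hnil | hne
  · rw [prodWord_eq_ofList fun i hi => hnil _ (hfD i hi), ofList_mem_langOf_iff] at hacc
    rw [prodWord_eq_ofList fun i hi => hnil _ (hfD' i hi), ofList_mem_langOf_iff]
    obtain ⟨q, hq, hreach⟩ := hacc
    exact ⟨q, hq, hreach.of_profile_eq (hC.profile_eq hf0 hf0')⟩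
  · exact prodWord_mem_langOf_of_mem_langOf hC hD hCD hDD hne hf0 hfD hf0' hfD' hacc

end Saturation

section Ramsey

theorem Ultrafilter.exists_eventually_eq {α κ : Type*} [Finite κ] (U : Ultrafilter α)
    (c : α → κ) : ∃ k, ∀ᶠ x in U, c x = k := by
  obtain ⟨k, hk⟩ := (U.map c).eq_pure_of_finite
  exact ⟨k, Ultrafilter.mem_map.1 (hk ▸ Ultrafilter.mem_pure.2 rfl : {k} ∈ U.map c)⟩

theorem exists_strictMono_of_eventually_eventually {f : Filter ℕ} [f.NeBot]
    (hf : f ≤ Filter.atTop) {P : ℕ → ℕ → Prop} (h : ∀ᶠ x in f, ∀ᶠ y in f, P x y) :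
    ∃ g : ℕ → ℕ, StrictMono g ∧ ∀ i j, i < j → P (g i) (g j) := by
  have hpick : ∀ T : {T : Set ℕ // T ∈ f}, ∃ x ∈ T.1, ∀ᶠ y in f, P x y := fun T =>
    Filter.nonempty_of_mem (Filter.inter_mem T.2 h)
  choose x hxT hxP using hpick
  let next : {T : Set ℕ // T ∈ f} → {T : Set ℕ // T ∈ f} := fun T =>
    ⟨T.1 ∩ {y | x T < y ∧ P (x T) y},
      Filter.inter_mem T.2 (((Filter.eventually_gt_atTop (x T)).filter_mono hf).and (hxP T))⟩
  let T : ℕ → {T : Set ℕ // T ∈ f} := fun n => next^[n] ⟨Set.univ, Filter.univ_mem⟩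
  have hT : ∀ n m, n < m → (T m).1 ⊆ {y | x (T n) < y ∧ P (x (T n)) y} := by
    intro n m hnm
    induction m, hnm using Nat.le_induction with
    | base =>
      simp only [T, Function.iterate_succ_apply']
      exact Set.inter_subset_right
    | succ m _ ih =>
      simp only [T, Function.iterate_succ_apply'] at ih ⊢
      exact Set.inter_subset_left.trans ih
  exact ⟨fun n => x (T n), fun i j hij => (hT i j hij (hxT (T j))).1,
    fun i j hij => (hT i j hij (hxT (T j))).2⟩

theorem exists_strictMono_color_eq {κ : Type*} [Finite κ] (c : ℕ → ℕ → κ) :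
    ∃ (g : ℕ → ℕ) (d : κ), StrictMono g ∧ ∀ i j, i < j → c (g i) (g j) = d := by
  choose col hcol using fun x => (Filter.hyperfilter ℕ).exists_eventually_eq (c x)
  obtain ⟨d, hd⟩ := (Filter.hyperfilter ℕ).exists_eventually_eq col
  obtain ⟨g, hg, hgd⟩ := exists_strictMono_of_eventually_eventually Nat.hyperfilter_le_atTop
    (hd.mono fun x hx => hx ▸ hcol x)
  exact ⟨g, d, hg, hgd⟩

end Ramsey

section Factorization

variable {δ : Q → A → Set Q} {Fs : Set Q}

theorem exists_mem_concPair_of_profile_eq {x u : List A}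
    (hx : profile δ Fs (x ++ u) = profile δ Fs x) (hu : profile δ Fs (u ++ u) = profile δ Fs u)
    {f : ℕ → List A} (hf0 : f 0 ∈ wordClass δ Fs x) (hf : ∀ i, 1 ≤ i → f i ∈ wordClass δ Fs u) :
    ∃ p : CPair δ Fs, prodWord f ∈ concPair p :=
  ⟨⟨(wordClass δ Fs x, wordClass δ Fs u), ⟨x, rfl⟩, ⟨u, rfl⟩,
    by rw [classMul_wordClass, wordClass_eq_iff, hx],
    by rw [classMul_wordClass, wordClass_eq_iff, hu]⟩, f, hf0, hf, rfl⟩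

theorem exists_mem_concPair_ofList (l : List A) : ∃ p : CPair δ Fs, ofList l ∈ concPair p := by
  let f : ℕ → List A := fun i => if i = 0 then l else []
  have hf : ∀ i, 1 ≤ i → f i = [] := fun i hi => by simp [f, show i ≠ 0 by omega]
  simpa [prodWord_eq_ofList hf, f] using exists_mem_concPair_of_profile_eq (δ := δ) (Fs := Fs)
    (x := l) (u := []) (by simp) rfl (f := f) (mem_wordClass_iff.2 rfl) fun i hi =>
      hf i hi ▸ mem_wordClass_iff.2 rfl

theorem exists_mem_concPair_ofStream [Finite Q] (s : ℕ → A) :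
    ∃ p : CPair δ Fs, ofStream s ∈ concPair p := by
  obtain ⟨g, d, hg, hgd⟩ := exists_strictMono_color_eq fun i j => profile δ Fs (seg s i j)
  set u := seg s (g 0) (g 1)
  have hu : ∀ i j, i < j → profile δ Fs (seg s (g i) (g j)) = profile δ Fs u := fun i j hij =>
    (hgd i j hij).trans (hgd 0 1 one_pos).symm
  have huu : profile δ Fs (u ++ u) = profile δ Fs u := by
    rw [profile_append rfl (hu 1 2 one_lt_two).symm, seg_append (hg.monotone zero_le_one)
      (hg.monotone one_le_two)]
    exact hu 0 2 two_pos
  have hx : profile δ Fs (seg s 0 (g 1) ++ u) = profile δ Fs (seg s 0 (g 1)) := by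
    rw [← seg_append (Nat.zero_le (g 0)) (hg.monotone zero_le_one), List.append_assoc]
    exact profile_append rfl huu
  -- The first block ends at `g 1`, not `g 0`: it then ends in `u`, so its class absorbs `[u]`
  -- and the prefix `seg s 0 (g 0)` needs no colour of its own.
  let b : ℕ → ℕ := fun i => if i = 0 then 0 else g i
  have hb : StrictMono b := strictMono_nat_of_lt_succ fun i => by
    rcases i with _ | i
    · simpa [b] using (Nat.zero_le _).trans_lt (hg zero_lt_one)
    · simpa [b] using hg i.succ.lt_succ_self
  obtain ⟨p, hp⟩ := exists_mem_concPair_of_profile_eq hx huu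
    (f := fun i => seg s (b i) (b (i + 1))) (mem_wordClass_iff.2 (by simp [b]))
    fun i hi => mem_wordClass_iff.2 <| by
      simpa [b, show i ≠ 0 by omega] using hu i (i + 1) (by omega)
  exact ⟨p, ofStream_eq_prodWord_seg hb rfl ▸ hp⟩

theorem exists_mem_concPair [Finite Q] (w : Word A) : ∃ p : CPair δ Fs, w ∈ concPair p := by
  rcases w.exists_eq_ofList_or_ofStream with ⟨l, rfl⟩ | ⟨s, rfl⟩
  exacts [exists_mem_concPair_ofList l, exists_mem_concPair_ofStream s]

end Factorization

section Galois

variable (δ : Q → A → Set Q) (Fs : Set Q)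

/-- The paper calls such a language closed. -/
def IsSaturated (M : Set (Word A)) : Prop :=
  ∀ p : CPair δ Fs, (concPair p ∩ M).Nonempty → concPair p ⊆ M

theorem isSaturated_langOf [Finite Q] (q0 : Q) : IsSaturated δ Fs (LangOf δ q0 Fs) :=
  fun p h => omegaProd_subset_langOf p.2.1 p.2.2.1 p.2.2.2.1 p.2.2.2.2 h

variable {δ Fs}

theorem IsSaturated.frakG_frakF_subset {M V : Set (Word A)} (hM : IsSaturated δ Fs M)
    (hV : V ⊆ M) : frakG (frakF δ Fs V) ⊆ M := fun w hw => by
  obtain ⟨p, ⟨x, hxp, hxV⟩, hwp⟩ := Set.mem_iUnion₂.1 hw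
  exact hM p ⟨x, hxp, hV hxV⟩ hwp

theorem IsSaturated.gammaOmega_alphaOmega_subset {M L : Set (Word A)} (hM : IsSaturated δ Fs M)
    (hL : L ⊆ M) : gammaOmega (alphaOmega δ Fs L) ⊆ M := by
  have hiter : ∀ n, frakG ((fun 𝒲 => frakF δ Fs (frakG 𝒲))^[n] (frakF δ Fs L)) ⊆ M := by
    intro n
    induction n with
    | zero => exact hM.frakG_frakF_subset hL
    | succ n ih =>
      rw [Function.iterate_succ_apply']
      exact hM.frakG_frakF_subset ih
  intro w hw
  obtain ⟨p, hp, hwp⟩ := Set.mem_iUnion₂.1 hw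
  obtain ⟨n, hn⟩ := Set.mem_iUnion.1 hp
  exact hiter (n + 1) (Set.mem_biUnion hn hwp)

theorem subset_gammaOmega_alphaOmega [Finite Q] (L : Set (Word A)) :
    L ⊆ gammaOmega (alphaOmega δ Fs L) := fun w hw => by
  obtain ⟨p, hp⟩ := exists_mem_concPair (δ := δ) (Fs := Fs) w
  have hpL : p ∈ frakF δ Fs L := ⟨w, hp, hw⟩
  exact Set.mem_biUnion (Set.mem_iUnion.2 ⟨0, w, hp, Set.mem_biUnion hpL hp⟩) hp

end Galois

theorem abstraction_complete_general {Q A : Type*} [Finite Q]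
    (δ : Q → A → Set Q) (q0 : Q) (Fs : Set Q) (L : Set (Word A)) :
    gammaOmega (alphaOmega δ Fs L) ⊆ LangOf δ q0 Fs ↔ L ⊆ LangOf δ q0 Fs :=
  ⟨(subset_gammaOmega_alphaOmega L).trans,
    (isSaturated_langOf δ Fs q0).gammaOmega_alphaOmega_subset⟩

/-- completeness of the abstraction with respect to the policy automaton:
`γ_{≤ω}(α_{≤ω}(L)) ⊆ L(𝔄)` iff `L ⊆ L(𝔄)`. -/
theorem abstraction_complete {Q A : Type*} [Finite Q] [Finite A]
    (δ : Q → A → Set Q) (q0 : Q) (Fs : Set Q) (L : Set (Word A)) :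
    gammaOmega (alphaOmega δ Fs L) ⊆ LangOf δ q0 Fs ↔ L ⊆ LangOf δ q0 Fs :=
  abstraction_complete_general δ q0 Fs L
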